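/- arXiv:1809.09934 — 5 statements merged into one kernel-verified Lean document; each statement's English description precedes it below -/
import Mathlib

section
/- The monomial ideal S_d generated by { M_i M_j : 2 ≤ i ≤ j ≤ d-2 } ∪ { M_1 M_i M_{d-1} : 2 ≤ i ≤ d-2 } ∪ { M_1^2 M_{d-1}^2 } in k[M_1,...,M_d] equals the intersection of the two monomial ideals ⟨ M_i M_j : 1 ≤ i ≤ j ≤ d-2 ⟩ and ⟨ M_i M_j : 2 ≤ i ≤ j ≤ d-1 ⟩. -/
/-!
All three ideals are monomial ideals, so everything happens on exponent vectors: the ideal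
generated by monomials with exponents in `S` is the intersection of those generated by `T` and
by `U` as soon as every `s ∈ S` dominates some `t ∈ T` and some `u ∈ U`, and every lcm `t ⊔ u`
dominates some `s ∈ S`. For `t = M_i M_j` (`1 ≤ i ≤ j ≤ d-2`) and `u = M_a M_b`
(`2 ≤ a ≤ b ≤ d-1`) this is clear unless `i = 1` and `b = d-1`; then the lcm is divisible by
`M_1 M_j M_{d-1}` if `j ≥ 2`, by `M_1 M_a M_{d-1}` if `j = 1` and `a ≤ d-2`, and equals
`M_1^2 M_{d-1}^2` if `j = 1` and `a = d-1`.
-/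

open MvPolynomial

namespace MvPolynomial

variable {σ R : Type*} [CommSemiring R]

theorem span_monomial_image_eq_inf {S T U : Set (σ →₀ ℕ)}
    (hST : ∀ s ∈ S, ∃ t ∈ T, t ≤ s) (hSU : ∀ s ∈ S, ∃ u ∈ U, u ≤ s)
    (hTU : ∀ t ∈ T, ∀ u ∈ U, ∃ s ∈ S, s ≤ t ⊔ u) :
    Ideal.span ((fun s => monomial s (1 : R)) '' S)
      = Ideal.span ((fun t => monomial t (1 : R)) '' T)
        ⊓ Ideal.span ((fun u => monomial u (1 : R)) '' U) := by
  ext p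
  simp only [Ideal.mem_inf, mem_ideal_span_monomial_image]
  constructor
  · intro hp
    constructor
    · intro m hm
      obtain ⟨s, hs, hsm⟩ := hp m hm
      obtain ⟨t, ht, hts⟩ := hST s hs
      exact ⟨t, ht, hts.trans hsm⟩
    · intro m hm
      obtain ⟨s, hs, hsm⟩ := hp m hm
      obtain ⟨u, hu, hus⟩ := hSU s hs
      exact ⟨u, hu, hus.trans hsm⟩
  · rintro ⟨hpT, hpU⟩ m hm
    obtain ⟨t, ht, htm⟩ := hpT m hm
    obtain ⟨u, hu, hum⟩ := hpU m hm
    obtain ⟨s, hs, hst⟩ := hTU t ht u hu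
    exact ⟨s, hs, hst.trans (sup_le htm hum)⟩

end MvPolynomial

namespace Finsupp

variable {σ : Type*}

theorem single_add_eq_sup {f : σ →₀ ℕ} {c : σ} (hc : f c = 0) (n : ℕ) :
    single c n + f = single c n ⊔ f := by
  ext v
  rcases eq_or_ne v c with rfl | hv
  · simp [hc]
  · simp [single_eq_of_ne hv]

end Finsupp

open Finsupp Set

section Exponents

variable {σ : Type*} (x : ℕ → σ)

def pairExponents (lo hi : ℕ) : Set (σ →₀ ℕ) :=
  {s | ∃ i j, lo ≤ i ∧ i ≤ j ∧ j ≤ hi ∧ s = single (x i) 1 + single (x j) 1}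

def sdExponents (d : ℕ) : Set (σ →₀ ℕ) :=
  pairExponents x 2 (d - 2)
    ∪ {s | ∃ i, 2 ≤ i ∧ i ≤ d - 2 ∧ s = single (x 1) 1 + single (x i) 1 + single (x (d - 1)) 1}
    ∪ {single (x 1) 2 + single (x (d - 1)) 2}

variable {x} {d : ℕ}

theorem sdExponents_exists_le_left (hd : 3 ≤ d) :
    ∀ s ∈ sdExponents x d, ∃ t ∈ pairExponents x 1 (d - 2), t ≤ s := by
  rintro _ ((⟨i, j, hi, hij, hj, rfl⟩ | ⟨i, hi, hid, rfl⟩) | rfl)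
  · exact ⟨_, ⟨i, j, by omega, hij, hj, rfl⟩, le_rfl⟩
  · exact ⟨_, ⟨1, i, le_rfl, by omega, hid, rfl⟩, le_self_add⟩
  · refine ⟨_, ⟨1, 1, le_rfl, le_rfl, by omega, rfl⟩, ?_⟩
    rw [← single_add]
    exact le_self_add

theorem sdExponents_exists_le_right (hd : 3 ≤ d) :
    ∀ s ∈ sdExponents x d, ∃ u ∈ pairExponents x 2 (d - 1), u ≤ s := by
  rintro _ ((⟨i, j, hi, hij, hj, rfl⟩ | ⟨i, hi, hid, rfl⟩) | rfl)
  · exact ⟨_, ⟨i, j, hi, hij, by omega, rfl⟩, le_rfl⟩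
  · refine ⟨_, ⟨i, d - 1, hi, by omega, le_rfl, rfl⟩, ?_⟩
    rw [add_assoc]
    exact le_add_self
  · refine ⟨_, ⟨d - 1, d - 1, by omega, le_rfl, le_rfl, rfl⟩, ?_⟩
    rw [← single_add]
    exact le_add_self

theorem sdExponents_exists_le_sup (hd : 3 ≤ d) (hx : InjOn x (Icc 1 (d - 1))) :
    ∀ t ∈ pairExponents x 1 (d - 2), ∀ u ∈ pairExponents x 2 (d - 1),
      ∃ s ∈ sdExponents x d, s ≤ t ⊔ u := by
  have hne : ∀ i j, 1 ≤ i → i ≤ d - 1 → 1 ≤ j → j ≤ d - 1 → i ≠ j → x i ≠ x j :=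
    fun i j hi hi' hj hj' hij => hx.ne ⟨hi, hi'⟩ ⟨hj, hj'⟩ hij
  rintro _ ⟨i, j, hi, hij, hj, rfl⟩ _ ⟨a, b, ha, hab, hb, rfl⟩
  by_cases hi2 : 2 ≤ i
  · exact ⟨_, Or.inl (Or.inl ⟨i, j, hi2, hij, hj, rfl⟩), le_sup_left⟩
  by_cases hbd : b ≤ d - 2
  · exact ⟨_, Or.inl (Or.inl ⟨a, b, ha, hab, hbd, rfl⟩), le_sup_right⟩
  obtain rfl : i = 1 := by omega
  obtain rfl : b = d - 1 := by omega
  have h1d : x 1 ≠ x (d - 1) := hne 1 (d - 1) le_rfl (by omega) (by omega) le_rfl (by omega)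
  by_cases hj2 : 2 ≤ j
  · refine ⟨_, Or.inl (Or.inr ⟨j, hj2, hj, rfl⟩), ?_⟩
    have hjd : x j ≠ x (d - 1) := hne j (d - 1) (by omega) (by omega) (by omega) le_rfl (by omega)
    calc single (x 1) 1 + single (x j) 1 + single (x (d - 1)) 1
        = single (x (d - 1)) 1 ⊔ (single (x 1) 1 + single (x j) 1) := by
          rw [add_comm, single_add_eq_sup]
          simp [single_eq_of_ne h1d.symm, single_eq_of_ne hjd.symm]
      _ ≤ _ := by
          rw [sup_comm]
          exact sup_le_sup_left le_add_self _
  obtain rfl : j = 1 := by omega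
  by_cases had : a ≤ d - 2
  · refine ⟨_, Or.inl (Or.inr ⟨a, ha, had, rfl⟩), ?_⟩
    have h1a : x 1 ≠ x a := hne 1 a le_rfl (by omega) (by omega) (by omega) (by omega)
    calc single (x 1) 1 + single (x a) 1 + single (x (d - 1)) 1
        = single (x 1) 1 ⊔ (single (x a) 1 + single (x (d - 1)) 1) := by
          rw [add_assoc, single_add_eq_sup]
          simp [single_eq_of_ne h1a, single_eq_of_ne h1d]
      _ ≤ _ := sup_le_sup_right le_self_add _
  obtain rfl : a = d - 1 := by omega
  refine ⟨_, Or.inr rfl, le_of_eq ?_⟩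
  rw [← single_add, ← single_add, single_add_eq_sup]
  exact single_eq_of_ne h1d

end Exponents

section Generators

variable {σ R : Type*} [CommSemiring R] {M : ℕ → MvPolynomial σ R} {x : ℕ → σ} {d : ℕ}

theorem X_mul_X_eq_monomial (a b : σ) :
    (X a * X b : MvPolynomial σ R) = monomial (single a 1 + single b 1) 1 := by
  simp [X, monomial_mul]

theorem setOf_mul_eq_image_pairExponents (hM : ∀ i ≤ d, M i = X (x i)) {lo hi : ℕ}
    (hhi : hi ≤ d) :
    {p | ∃ i j, lo ≤ i ∧ i ≤ j ∧ j ≤ hi ∧ p = M i * M j}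
      = (fun s => monomial s (1 : R)) '' pairExponents x lo hi := by
  have hMM : ∀ i j, i ≤ hi → j ≤ hi → M i * M j = monomial (single (x i) 1 + single (x j) 1) 1 :=
    fun i j hi_le hj_le => by rw [hM i (by omega), hM j (by omega), X_mul_X_eq_monomial]
  ext p
  simp only [pairExponents, mem_image, mem_ofPred_eq]
  constructor
  · rintro ⟨i, j, hlo, hij, hj, rfl⟩
    exact ⟨_, ⟨i, j, hlo, hij, hj, rfl⟩, (hMM i j (by omega) hj).symm⟩
  · rintro ⟨_, ⟨i, j, hlo, hij, hj, rfl⟩, rfl⟩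
    exact ⟨i, j, hlo, hij, hj, (hMM i j (by omega) hj).symm⟩

theorem sdGenerators_eq_image_sdExponents (hM : ∀ i ≤ d, M i = X (x i)) (hd : 1 ≤ d) :
    {p | ∃ i j, 2 ≤ i ∧ i ≤ j ∧ j ≤ d - 2 ∧ p = M i * M j}
        ∪ {p | ∃ i, 2 ≤ i ∧ i ≤ d - 2 ∧ p = M 1 * M i * M (d - 1)}
        ∪ {M 1 ^ 2 * M (d - 1) ^ 2}
      = (fun s => monomial s (1 : R)) '' sdExponents x d := by
  have hM3 : ∀ i ≤ d - 2, M 1 * M i * M (d - 1)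
      = monomial (single (x 1) 1 + single (x i) 1 + single (x (d - 1)) 1) 1 := fun i hi => by
    rw [hM 1 hd, hM i (by omega), hM (d - 1) (by omega), X_mul_X_eq_monomial]
    simp [X, monomial_mul]
  have hsq : M 1 ^ 2 * M (d - 1) ^ 2 = monomial (single (x 1) 2 + single (x (d - 1)) 2) 1 := by
    rw [hM 1 hd, hM (d - 1) (by omega)]
    simp [X_pow_eq_monomial, monomial_mul]
  rw [sdExponents, image_union, image_union, image_singleton, ← hsq,
    ← setOf_mul_eq_image_pairExponents hM (by omega)]
  congr 2
  ext p
  simp only [mem_image, mem_ofPred_eq]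
  constructor
  · rintro ⟨i, hi, hid, rfl⟩
    exact ⟨_, ⟨i, hi, hid, rfl⟩, (hM3 i hid).symm⟩
  · rintro ⟨_, ⟨i, hi, hid, rfl⟩, rfl⟩
    exact ⟨i, hi, hid, (hM3 i hid).symm⟩

end Generators

/-- the monomial ideal `S_d` equals the intersection
`⟨M_i M_j : 1 ≤ i ≤ j ≤ d−2⟩ ⊓ ⟨M_i M_j : 2 ≤ i ≤ j ≤ d−1⟩`
in `k[M_1,…,M_d]` (realized inside `k[M_0,M_1,…,M_d]`, variable `M_0` unused). -/
theorem stmt4 (k : Type*) [Field k] (d : ℕ) (hd : 6 ≤ d)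
    (M : ℕ → MvPolynomial (Fin (d + 1)) k)
    (hM : ∀ (i : ℕ) (hi : i ≤ d), M i = MvPolynomial.X (⟨i, by omega⟩ : Fin (d + 1))) :
    Ideal.span ({p | ∃ i j : ℕ, 2 ≤ i ∧ i ≤ j ∧ j ≤ d - 2 ∧ p = M i * M j}
        ∪ {p | ∃ i : ℕ, 2 ≤ i ∧ i ≤ d - 2 ∧ p = M 1 * M i * M (d - 1)}
        ∪ {M 1 ^ 2 * M (d - 1) ^ 2})
      = Ideal.span {p | ∃ i j : ℕ, 1 ≤ i ∧ i ≤ j ∧ j ≤ d - 2 ∧ p = M i * M j}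
        ⊓ Ideal.span {p | ∃ i j : ℕ, 2 ≤ i ∧ i ≤ j ∧ j ≤ d - 1 ∧ p = M i * M j} := by
  have hMx : ∀ i ≤ d, M i = X (Fin.ofNat (d + 1) i) := fun i hi => by
    rw [hM i hi]
    congr 1
    ext
    rw [Fin.val_ofNat, Nat.mod_eq_of_lt (by omega)]
  have hx : InjOn (Fin.ofNat (d + 1)) (Icc 1 (d - 1)) := fun i hi j hj hij => by
    have hval := congrArg Fin.val hij
    rwa [Fin.val_ofNat, Fin.val_ofNat, Nat.mod_eq_of_lt (by grind),
      Nat.mod_eq_of_lt (by grind)] at hval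
  rw [sdGenerators_eq_image_sdExponents hMx (by omega),
    setOf_mul_eq_image_pairExponents hMx (by omega), setOf_mul_eq_image_pairExponents hMx (by omega)]
  exact span_monomial_image_eq_inf (sdExponents_exists_le_left (by omega))
    (sdExponents_exists_le_right (by omega)) (sdExponents_exists_le_sup (by omega) hx)
end

section
/- Consider the graded ring homomorphism mom_d: k[M_1,...,M_d] → k[A,X] sending M_i to (X + iA)X^{i-1}, where deg(M_i) = i and deg A = deg X = 1. For each n ≥ 2, the degree-n graded piece of the image of mom_d is an n-dimensional k-vector space with basis { X^n + nAX^{n-1} } ∪ { A^i X^{n-i} : 2 ≤ i ≤ n }. -/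
/-!
The image `S` contains `X + A = M₁`, `A² = M₁² - M₂` and `2A²X = M₁M₂ - M₃`. Since `A² ∈ S`, the
elements of the form `s + tA` with `s, t ∈ S` form a subalgebra containing `A` and `X`, hence
everything; so `A² · k[A,X] ⊆ S`. This gives `A^i X^(n-i) ∈ S` for `i ≥ 2`, and
`Xⁿ + nAXⁿ⁻¹ ∈ S` because it is `(X + A)ⁿ` modulo `A²`.

Conversely, the evaluations `A ↦ ε, X ↦ 1` and `A ↦ 0, X ↦ 1 + ε` into the dual numbers agree on
every `M_i`, as `(1 + ε)^i = 1 + iε`, but not on `Xⁿ`; so `Xⁿ ∉ S`. Since the proposed basis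
together with `Xⁿ` spans the degree-`n` piece, it spans the degree-`n` part of `S`.
-/

open MvPolynomial DualNumber

theorem Subalgebra.exists_add_mul_eq_of_mem_adjoin {R A : Type*} [CommRing R] [CommRing A]
    [Algebra R A] {S : Subalgebra R A} {a x : A} (hxa : x + a ∈ S) (ha : a ^ 2 ∈ S) {r : A}
    (hr : r ∈ Algebra.adjoin R {a, x}) : ∃ s ∈ S, ∃ t ∈ S, s + t * a = r := by
  induction hr using Algebra.adjoin_induction with
  | mem r hr =>
    rcases hr with h | h
    · exact ⟨0, S.zero_mem, 1, S.one_mem, by rw [h]; ring⟩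
    · exact ⟨x + a, hxa, -1, neg_mem S.one_mem, by rw [Set.mem_singleton_iff.mp h]; ring⟩
  | algebraMap c => exact ⟨algebraMap R A c, S.algebraMap_mem c, 0, S.zero_mem, by ring⟩
  | add r r' _ _ h h' =>
    obtain ⟨s, hs, t, ht, rfl⟩ := h
    obtain ⟨s', hs', t', ht', rfl⟩ := h'
    exact ⟨s + s', add_mem hs hs', t + t', add_mem ht ht', by ring⟩
  | mul r r' _ _ h h' =>
    obtain ⟨s, hs, t, ht, rfl⟩ := h
    obtain ⟨s', hs', t', ht', rfl⟩ := h'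
    exact ⟨s * s' + a ^ 2 * (t * t'), add_mem (mul_mem hs hs') (mul_mem ha (mul_mem ht ht')),
      s * t' + t * s', add_mem (mul_mem hs ht') (mul_mem ht hs'), by ring⟩

theorem Subalgebra.sq_mul_mem_of_mem_adjoin {R A : Type*} [CommRing R] [CommRing A]
    [Algebra R A] {S : Subalgebra R A} {a x : A} (hxa : x + a ∈ S) (ha : a ^ 2 ∈ S)
    (hax : a ^ 2 * x ∈ S) {r : A} (hr : r ∈ Algebra.adjoin R {a, x}) : a ^ 2 * r ∈ S := by
  obtain ⟨s, hs, t, ht, rfl⟩ := exists_add_mul_eq_of_mem_adjoin hxa ha hr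
  have h : a ^ 2 * (s + t * a) = a ^ 2 * s + ((x + a) * a ^ 2 - a ^ 2 * x) * t := by ring
  rw [h]
  exact add_mem (mul_mem ha hs) (mul_mem (sub_mem (mul_mem hxa ha) hax) ht)

theorem Submodule.le_of_le_sup_span_singleton {K V : Type*} [DivisionRing K] [AddCommGroup V]
    [Module K V] {p q : Submodule K V} {v : V} (hpq : p ≤ q) (hq : q ≤ p ⊔ K ∙ v)
    (hv : v ∉ q) : q ≤ p := by
  intro w hw
  obtain ⟨y, hy, z, hz, rfl⟩ := Submodule.mem_sup.mp (hq hw)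
  obtain ⟨c, rfl⟩ := Submodule.mem_span_singleton.mp hz
  obtain rfl | hc := eq_or_ne c 0
  · simpa using hy
  · have hcv : c • v ∈ q := by simpa using q.sub_mem hw (hpq hy)
    exact absurd (by simpa [hc] using q.smul_mem c⁻¹ hcv) hv

theorem DualNumber.one_add_eps_pow {R : Type*} [CommRing R] (m : ℕ) :
    (1 + ε : DualNumber R) ^ m = 1 + (m : DualNumber R) * ε := by
  induction m with
  | zero => simp
  | succ m ih =>
    rw [pow_succ, ih]
    push_cast
    linear_combination (m : DualNumber R) * eps_mul_eps (R := R)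

theorem MvPolynomial.adjoin_X_zero_X_one (k : Type*) [CommSemiring k] :
    Algebra.adjoin k {X 0, X 1} = (⊤ : Subalgebra k (MvPolynomial (Fin 2) k)) := by
  rw [← adjoin_range_X]
  congr
  ext
  simp [Fin.exists_fin_two, eq_comm]

theorem MvPolynomial.monomial_one_eq_X_zero_pow_mul_X_one_pow (k : Type*) [CommSemiring k]
    (e : Fin 2 →₀ ℕ) : monomial e (1 : k) = X 0 ^ e 0 * X 1 ^ e 1 := by
  rw [monomial_eq, C_1, one_mul, Finsupp.prod_fintype _ _ (by simp), Fin.prod_univ_two]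

/- `X 0` and `X 1` play the roles of `A` and `X`. -/

noncomputable def momentMap (k : Type*) [CommRing k] (d : ℕ) :
    MvPolynomial (Fin d) k →ₐ[k] MvPolynomial (Fin 2) k :=
  aeval fun i => (X 1 + (((i : ℕ) + 1 : ℕ) : MvPolynomial (Fin 2) k) * X 0) * X 1 ^ (i : ℕ)

noncomputable def momentBasis (k : Type*) [CommRing k] (n : ℕ) (j : Fin n) :
    MvPolynomial (Fin 2) k :=
  if (j : ℕ) = 0 then X 1 ^ n + (n : MvPolynomial (Fin 2) k) * X 0 * X 1 ^ (n - 1)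
  else X 0 ^ ((j : ℕ) + 1) * X 1 ^ (n - ((j : ℕ) + 1))

section CommRing

variable {k : Type*} [CommRing k] {d : ℕ}

theorem momentMap_X (i : Fin d) : momentMap k d (X i) =
    (X 1 + (((i : ℕ) + 1 : ℕ) : MvPolynomial (Fin 2) k) * X 0) * X 1 ^ (i : ℕ) :=
  aeval_X _ _

theorem mem_range_momentMap (i : Fin d) :
    (X 1 + (((i : ℕ) + 1 : ℕ) : MvPolynomial (Fin 2) k) * X 0) * X 1 ^ (i : ℕ) ∈
      (momentMap k d).range :=
  ⟨X i, momentMap_X i⟩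

theorem range_momentMap_le_equalizer :
    (momentMap k d).range ≤
      AlgHom.equalizer (aeval ![(ε : DualNumber k), 1]) (aeval ![0, 1 + ε]) := by
  have h : (aeval ![(ε : DualNumber k), 1]).comp (momentMap k d) =
      (aeval ![0, 1 + ε]).comp (momentMap k d) := by
    refine algHom_ext fun i => ?_
    simp only [AlgHom.comp_apply, momentMap_X, map_mul, map_add, map_pow, map_natCast, aeval_X,
      Matrix.cons_val_zero, Matrix.cons_val_one, Matrix.cons_val_fin_one, Nat.cast_add,
      Nat.cast_one, one_pow, mul_one, mul_zero, add_zero, map_one, one_add_eps_pow]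
    linear_combination (-((i : ℕ) : DualNumber k)) * eps_mul_eps (R := k)
  rintro _ ⟨q, rfl⟩
  exact DFunLike.congr_fun h q

theorem X_one_pow_notMem_range_momentMap [CharZero k] {n : ℕ} (hn : n ≠ 0) :
    X 1 ^ n ∉ (momentMap k d).range := by
  intro h
  have h : (1 : DualNumber k) = 1 + (n : DualNumber k) * ε := by
    simpa [DualNumber.one_add_eps_pow] using range_momentMap_le_equalizer h
  simpa [eq_comm, hn] using congrArg TrivSqZeroExt.snd h

theorem momentBasis_isHomogeneous {n : ℕ} (j : Fin n) : (momentBasis k n j).IsHomogeneous n := by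
  have hjn := j.isLt
  unfold momentBasis
  split_ifs with hj
  · refine (isHomogeneous_X_pow _ n).add ?_
    have h := ((isHomogeneous_C (Fin 2) (n : k)).mul (isHomogeneous_X k 0)).mul
      (isHomogeneous_X_pow 1 (n - 1))
    rwa [map_natCast, zero_add, Nat.add_sub_cancel' (by omega)] at h
  · have h := (isHomogeneous_X_pow (R := k) (0 : Fin 2) ((j : ℕ) + 1)).mul
      (isHomogeneous_X_pow 1 (n - ((j : ℕ) + 1)))
    rwa [Nat.add_sub_cancel' hjn] at h

end CommRing

section Field

variable {k : Type*} [Field k] {d : ℕ}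

theorem X_zero_sq_mul_mem_range_momentMap [NeZero (2 : k)] (hd : 3 ≤ d)
    (q : MvPolynomial (Fin 2) k) : X 0 ^ 2 * q ∈ (momentMap k d).range := by
  have m1 := mem_range_momentMap (k := k) (d := d) ⟨0, by omega⟩
  have m2 := mem_range_momentMap (k := k) (d := d) ⟨1, by omega⟩
  have m3 := mem_range_momentMap (k := k) (d := d) ⟨2, by omega⟩
  push_cast at m1 m2 m3
  simp only [one_mul, pow_zero, mul_one, pow_one] at m1 m2
  have hA2 : (X 0 ^ 2 : MvPolynomial (Fin 2) k) ∈ (momentMap k d).range := by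
    convert sub_mem (mul_mem m1 m1) m2 using 1
    ring
  have hA2X : (X 0 ^ 2 * X 1 : MvPolynomial (Fin 2) k) ∈ (momentMap k d).range := by
    convert (momentMap k d).range.smul_mem (sub_mem (mul_mem m1 m2) m3) (2⁻¹ : k) using 1
    have h2 : (C 2⁻¹ * 2 : MvPolynomial (Fin 2) k) = 1 := by
      rw [← map_ofNat C 2, ← C_mul, inv_mul_cancel₀ two_ne_zero, C_1]
    rw [smul_eq_C_mul]
    linear_combination (-X 0 ^ 2 * X 1 : MvPolynomial (Fin 2) k) * h2
  refine Subalgebra.sq_mul_mem_of_mem_adjoin m1 hA2 hA2X ?_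
  rw [adjoin_X_zero_X_one]
  trivial

theorem X_one_pow_add_mem_range_momentMap [NeZero (2 : k)] (hd : 3 ≤ d) (n : ℕ) :
    X 1 ^ n + (n : MvPolynomial (Fin 2) k) * X 0 * X 1 ^ (n - 1) ∈ (momentMap k d).range := by
  obtain ⟨q, hq⟩ := sq_dvd_add_pow_sub_sub (X 0 : MvPolynomial (Fin 2) k) (X 1) n
  have hpow : (X 1 + X 0 : MvPolynomial (Fin 2) k) ^ n ∈ (momentMap k d).range := by
    simpa using pow_mem (mem_range_momentMap (k := k) (d := d) ⟨0, by omega⟩) n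
  convert sub_mem hpow (X_zero_sq_mul_mem_range_momentMap hd q) using 1
  linear_combination -hq

theorem momentBasis_mem_range_momentMap [NeZero (2 : k)] (hd : 3 ≤ d) {n : ℕ} (j : Fin n) :
    momentBasis k n j ∈ (momentMap k d).range := by
  unfold momentBasis
  split_ifs with hj
  · exact X_one_pow_add_mem_range_momentMap hd n
  · obtain ⟨i, hi⟩ : ∃ i, (j : ℕ) + 1 = i + 2 := ⟨j - 1, by omega⟩
    rw [hi, pow_add, mul_comm (X 0 ^ i), mul_assoc]
    exact X_zero_sq_mul_mem_range_momentMap hd _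

theorem linearIndependent_momentBasis (n : ℕ) : LinearIndependent k (momentBasis k n) := by
  cases n with
  | zero => exact linearIndependent_empty_type
  | succ m =>
    rw [← Fin.cons_self_tail (momentBasis k (m + 1)), linearIndependent_finCons]
    constructor
    · let e : Fin m → Fin 2 →₀ ℕ := fun j =>
        Finsupp.single 0 ((j : ℕ) + 2) + Finsupp.single 1 (m - ((j : ℕ) + 1))
      have he : Function.Injective e := fun i j h =>
        Fin.ext (by simpa [e] using congrArg (· 0) h)
      have htail : Fin.tail (momentBasis k (m + 1)) = basisMonomials (Fin 2) k ∘ e := by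
        ext1 j
        simp [Fin.tail, momentBasis, e, monomial_one_eq_X_zero_pow_mul_X_one_pow]
      rw [htail]
      exact (basisMonomials (Fin 2) k).linearIndependent.comp e he
    · intro h
      have hker : Submodule.span k (Set.range (Fin.tail (momentBasis k (m + 1)))) ≤
          LinearMap.ker (aeval ![(0 : k), 1]).toLinearMap := by
        rw [Submodule.span_le]
        rintro _ ⟨j, rfl⟩
        simp [Fin.tail, momentBasis]
      simpa [momentBasis] using hker h

theorem homogeneousSubmodule_le_span_momentBasis_sup [CharZero k] (n : ℕ) :
    homogeneousSubmodule (Fin 2) k n ≤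
      Submodule.span k (Set.range (momentBasis k n)) ⊔ k ∙ (X 1 ^ n : MvPolynomial (Fin 2) k) := by
  rw [homogeneousSubmodule_eq_finsupp_supported, AddMonoidAlgebra.supported_eq_span_single,
    Submodule.span_le]
  rintro _ ⟨e, he, rfl⟩
  replace he : e 0 + e 1 = n := by simpa [Finsupp.degree_eq_sum] using he
  dsimp only
  rw [SetLike.mem_coe, single_eq_monomial, monomial_one_eq_X_zero_pow_mul_X_one_pow]
  generalize e 0 = a, e 1 = b at he
  subst he
  rcases (show a = 0 ∨ a = 1 ∨ 2 ≤ a by omega) with rfl | rfl | ha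
  · simpa using Submodule.mem_sup_right (Submodule.mem_span_singleton_self _)
  · have hinv : (C ((1 + b : ℕ) : k)⁻¹ * ((1 + b : ℕ) : MvPolynomial (Fin 2) k)) = 1 := by
      rw [← map_natCast C, ← C_mul, inv_mul_cancel₀ (Nat.cast_ne_zero.mpr (by omega)), C_1]
    have key : X 0 ^ 1 * X 1 ^ b =
        ((1 + b : ℕ) : k)⁻¹ • (momentBasis k (1 + b) ⟨0, by omega⟩ - X 1 ^ (1 + b)) := by
      simp only [momentBasis, if_pos, smul_eq_C_mul, Nat.add_sub_cancel_left]
      linear_combination (-X 0 * X 1 ^ b : MvPolynomial (Fin 2) k) * hinv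
    rw [key]
    exact Submodule.smul_mem _ _ (sub_mem (Submodule.mem_sup_left (Submodule.subset_span ⟨_, rfl⟩))
      (Submodule.mem_sup_right (Submodule.mem_span_singleton_self _)))
  · obtain ⟨i, rfl⟩ : ∃ i, a = i + 2 := ⟨a - 2, by omega⟩
    refine Submodule.mem_sup_left (Submodule.subset_span ⟨⟨i + 1, by omega⟩, ?_⟩)
    simp [momentBasis]

end Field

/-- The variable `X i` of the domain plays the role of `M_{i+1}`. -/
theorem stmt6 (k : Type*) [Field k] [CharZero k] (d : ℕ) (hd : 3 ≤ d)
    (A X : MvPolynomial (Fin 2) k) (hA : A = MvPolynomial.X 0) (hX : X = MvPolynomial.X 1)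
    (mom : MvPolynomial (Fin d) k →ₐ[k] MvPolynomial (Fin 2) k)
    (hmom : ∀ i : Fin d,
      mom (MvPolynomial.X i) = (X + (((i : ℕ) + 1 : ℕ) : MvPolynomial (Fin 2) k) * A)
        * X ^ (i : ℕ))
    (n : ℕ) (hn : 2 ≤ n)
    (fam : Fin n → MvPolynomial (Fin 2) k)
    (hfam0 : fam ⟨0, by omega⟩ = X ^ n + (n : MvPolynomial (Fin 2) k) * A * X ^ (n - 1))
    (hfam : ∀ j : Fin n, (j : ℕ) ≠ 0 → fam j = A ^ ((j : ℕ) + 1) * X ^ (n - ((j : ℕ) + 1))) :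
    LinearIndependent k fam ∧
      Submodule.span k (Set.range fam)
        = Subalgebra.toSubmodule mom.range ⊓ homogeneousSubmodule (Fin 2) k n := by
  subst hA hX
  obtain rfl : mom = momentMap k d := algHom_ext fun i => by rw [hmom, momentMap_X]
  obtain rfl : fam = momentBasis k n := by
    funext j
    by_cases hj : (j : ℕ) = 0
    · rw [show j = ⟨0, by omega⟩ from Fin.ext hj, hfam0]
      simp [momentBasis]
    · simp [momentBasis, hj, hfam j hj]
  have hspan : Submodule.span k (Set.range (momentBasis k n)) ≤
      Subalgebra.toSubmodule (momentMap k d).range ⊓ homogeneousSubmodule (Fin 2) k n :=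
    Submodule.span_le.mpr <| Set.range_subset_iff.mpr fun j =>
      ⟨momentBasis_mem_range_momentMap hd j, momentBasis_isHomogeneous j⟩
  refine ⟨linearIndependent_momentBasis n, le_antisymm hspan ?_⟩
  exact Submodule.le_of_le_sup_span_singleton hspan
    (inf_le_right.trans (homogeneousSubmodule_le_span_momentBasis_sup n))
    fun h => X_one_pow_notMem_range_momentMap (by omega) h.1
end

section
/- The following power series identity holds: 1/(1-t^d) · [ (1+t+...+t^{d-2})/(1-t^{d-1}) + (1 + t^2 + t^3 + ... + t^{d-1})/(1-t) − (1+t+...+t^d) ] = (1 − t + t^2)/(1−t)^2, for every integer d ≥ 2. -/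
open PowerSeries Finset

/-!
Put `G = 1 + t + ⋯ + t^(d-1)`, so that `1 - t^d = (1 - t) G`. In the bracket the first term is
`1/(1 - t)`, the last is `(1 - t^(d+1))/(1 - t)`, and the middle numerator satisfies
`(1 + t^2 + ⋯ + t^(d-1)) + t^(d+1) = (1 - t + t^2) G`. Hence the bracket equals
`(1 - t + t^2) G/(1 - t)`, and `G` cancels against the prefactor.
-/

theorem one_add_sum_Icc_two_add_pow_eq {R : Type*} [CommRing R] (x : R) {d : ℕ} (hd : 2 ≤ d) :
    1 + ∑ i ∈ Icc 2 (d - 1), x ^ i + x ^ (d + 1) = (1 - x + x ^ 2) * ∑ i ∈ range d, x ^ i := by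
  obtain ⟨n, rfl⟩ := Nat.exists_eq_add_of_le' (by omega : 1 ≤ d)
  have hsplit : ∑ i ∈ range (n + 1), x ^ i = 1 + x + ∑ i ∈ Icc 2 n, x ^ i := by
    rw [range_eq_Ico, ← sum_Ico_consecutive _ (Nat.zero_le 2) (by omega : 2 ≤ n + 1),
      Ico_add_one_right_eq_Icc]
    simp [sum_range_succ]
  rw [Nat.add_sub_cancel]
  linear_combination -hsplit + x * mul_neg_geom_sum x (n + 1)

namespace PowerSeries

variable {R k : Type*} [CommRing R] [Field k]

theorem constantCoeff_one_sub_X_pow {n : ℕ} (hn : n ≠ 0) :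
    constantCoeff (1 - X ^ n : R⟦X⟧) = 1 := by
  simp [hn]

theorem constantCoeff_geom_sum_X {n : ℕ} (hn : n ≠ 0) :
    constantCoeff (∑ i ∈ range n, X ^ i : R⟦X⟧) = 1 := by
  simp [hn]

theorem geom_sum_X_eq_mul_inv (n : ℕ) :
    ∑ i ∈ range n, (X : k⟦X⟧) ^ i = (1 - X ^ n) * (1 - X)⁻¹ :=
  (eq_mul_inv_iff_mul_eq (by simp)).2 (geom_sum_mul_neg X n)

theorem geom_sum_X_mul_inv_one_sub_X_pow {n : ℕ} (hn : n ≠ 0) :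
    (∑ i ∈ range n, (X : k⟦X⟧) ^ i) * (1 - X ^ n)⁻¹ = (1 - X)⁻¹ := by
  rw [geom_sum_X_eq_mul_inv, mul_right_comm,
    PowerSeries.mul_inv_cancel _ (by simp [constantCoeff_one_sub_X_pow hn]), one_mul]

end PowerSeries

/-- the power series identity
`1/(1−t^d) · [ (1+⋯+t^(d-2))/(1−t^(d-1)) + (1+t^2+⋯+t^(d-1))/(1−t) − (1+⋯+t^d) ]
 = (1−t+t^2)/(1−t)^2` over `ℚ`, for every `d ≥ 2`. -/
theorem stmt8 (d : ℕ) (hd : 2 ≤ d) :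
    (1 - (PowerSeries.X : PowerSeries ℚ) ^ d)⁻¹ *
      ((∑ i ∈ Finset.range (d - 1), (PowerSeries.X : PowerSeries ℚ) ^ i)
          * (1 - (PowerSeries.X : PowerSeries ℚ) ^ (d - 1))⁻¹
        + (1 + ∑ i ∈ Finset.Icc 2 (d - 1), (PowerSeries.X : PowerSeries ℚ) ^ i)
          * (1 - (PowerSeries.X : PowerSeries ℚ))⁻¹
        - ∑ i ∈ Finset.range (d + 1), (PowerSeries.X : PowerSeries ℚ) ^ i)
      = (1 - (PowerSeries.X : PowerSeries ℚ) + (PowerSeries.X : PowerSeries ℚ) ^ 2)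
        * ((1 - (PowerSeries.X : PowerSeries ℚ)) ^ 2)⁻¹ := by
  have hbracket : (∑ i ∈ range (d - 1), (X : ℚ⟦X⟧) ^ i) * (1 - X ^ (d - 1))⁻¹
      + (1 + ∑ i ∈ Icc 2 (d - 1), X ^ i) * (1 - X)⁻¹ - ∑ i ∈ range (d + 1), X ^ i
      = (1 - X + X ^ 2) * (∑ i ∈ range d, X ^ i) * (1 - X)⁻¹ := by
    rw [geom_sum_X_mul_inv_one_sub_X_pow (by omega), geom_sum_X_eq_mul_inv (d + 1)]
    linear_combination (1 - X : ℚ⟦X⟧)⁻¹ * one_add_sum_Icc_two_add_pow_eq (X : ℚ⟦X⟧) hd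
  have hG : (∑ i ∈ range d, (X : ℚ⟦X⟧) ^ i)⁻¹ * ∑ i ∈ range d, X ^ i = 1 :=
    PowerSeries.inv_mul_cancel _ (by rw [constantCoeff_geom_sum_X (by omega)]; exact one_ne_zero)
  rw [hbracket, ← mul_neg_geom_sum, PowerSeries.mul_inv_rev, sq (1 - X : ℚ⟦X⟧),
    PowerSeries.mul_inv_rev]
  linear_combination (1 - X + X ^ 2) * (1 - X : ℚ⟦X⟧)⁻¹ * (1 - X)⁻¹ * hG
end

section
/- Each generator (j−i+3)M_{i−2}M_{i−1}M_{j+1}M_{j+2} − 2(j−i+2)M_{i−2}M_i M_j M_{j+2} + (j−i+1)M_{i−1}M_i M_j M_{j+1} (with M_0 = 1, for 2 ≤ i ≤ j ≤ d−2) vanishes when each M_k is substituted by the Pareto moment m_k = α ξ^k/(α − k), for α not in {0, 1, ..., d} and ξ ≠ 0. -/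
/-!
Writing `m_k = α ξ^k / (α - k)`, every monomial of the generator has index sum `2i + 2j`, so the
generator equals `α⁴ ξ^(2i+2j)` times a sum of three reciprocals of products of the `α - k`.
With `s = α - i` and `t = α - j` one has `j - i = s - t`, and that sum vanishes identically as a
rational function of `s` and `t`.
-/

-- Stated with iterated divisions so that `ring` treats each denominator as a separate inverse.
theorem quartic_reciprocal_identity {K : Type*} [Field K] {s t : K}
    (hs : s ≠ 0) (hs₁ : s + 1 ≠ 0) (hs₂ : s + 2 ≠ 0)
    (ht : t ≠ 0) (ht₁ : t - 1 ≠ 0) (ht₂ : t - 2 ≠ 0) :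
    (s - t + 3) / (s + 2) / (s + 1) / (t - 1) / (t - 2)
      - 2 * (s - t + 2) / (s + 2) / s / t / (t - 2)
      + (s - t + 1) / (s + 1) / s / t / (t - 1) = 0 := by
  field_simp
  ring

theorem stmt15_general (K : Type*) [Field K] (d : ℕ)
    (α ξ : K) (hα : ∀ n : ℕ, n ≤ d → α ≠ (n : K))
    (m : ℕ → K) (hm : ∀ n : ℕ, m n = α / (α - (n : K)) * ξ ^ n)
    (i j : ℕ) (hi : 2 ≤ i) (hij : i ≤ j) (hj : j ≤ d - 2) :
    ((j - i + 3 : ℕ) : K) * (m (i - 2) * m (i - 1) * m (j + 1) * m (j + 2))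
      - 2 * ((j - i + 2 : ℕ) : K) * (m (i - 2) * m i * m j * m (j + 2))
      + ((j - i + 1 : ℕ) : K) * (m (i - 1) * m i * m j * m (j + 1)) = 0 := by
  obtain ⟨k, rfl⟩ : ∃ k, i = k + 2 := ⟨i - 2, by omega⟩
  obtain ⟨p, rfl⟩ : ∃ p, j = k + 2 + p := ⟨j - (k + 2), by omega⟩
  have hden : ∀ n : ℕ, n ≤ d → ∀ c : K, c = α - n → c ≠ 0 := fun n hn c hc =>
    hc ▸ sub_ne_zero.mpr (hα n hn)
  have hkey := quartic_reciprocal_identity (s := α - (k + 2)) (t := α - (k + 2 + p))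
    (hden (k + 2) (by omega) _ (by push_cast; ring))
    (hden (k + 1) (by omega) _ (by push_cast; ring))
    (hden k (by omega) _ (by ring))
    (hden (k + 2 + p) (by omega) _ (by push_cast; ring))
    (hden (k + 2 + p + 1) (by omega) _ (by push_cast; ring))
    (hden (k + 2 + p + 2) (by omega) _ (by push_cast; ring))
  rw [show k + 2 - 2 = k by omega, show k + 2 - 1 = k + 1 by omega,
    show k + 2 + p - (k + 2) = p by omega]
  simp only [hm]
  push_cast
  linear_combination (α ^ 4 * ξ ^ (4 * k + 2 * p + 8)) * hkey

/-- each generator of the Pareto ideal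
`(j−i+3)M_{i−2}M_{i−1}M_{j+1}M_{j+2} − 2(j−i+2)M_{i−2}M_iM_jM_{j+2} + (j−i+1)M_{i−1}M_iM_jM_{j+1}`
(for `2 ≤ i ≤ j ≤ d−2`) vanishes at the Pareto moments `m_k = (α/(α−k))·ξ^k`. -/
theorem stmt15 (K : Type*) [Field K] [CharZero K] (d : ℕ) (hd : 6 ≤ d)
    (α ξ : K) (hα : ∀ n : ℕ, n ≤ d → α ≠ (n : K)) (hξ : ξ ≠ 0)
    (m : ℕ → K) (hm : ∀ n : ℕ, m n = α / (α - (n : K)) * ξ ^ n)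
    (i j : ℕ) (hi : 2 ≤ i) (hij : i ≤ j) (hj : j ≤ d - 2) :
    ((j - i + 3 : ℕ) : K) * (m (i - 2) * m (i - 1) * m (j + 1) * m (j + 2))
      - 2 * ((j - i + 2 : ℕ) : K) * (m (i - 2) * m i * m j * m (j + 2))
      + ((j - i + 1 : ℕ) : K) * (m (i - 1) * m i * m j * m (j + 1)) = 0 :=
  stmt15_general K d α ξ hα m hm i j hi hij hj
end

section
/- Suppose m_i = ∑_{j=1}^r ∑_{k=0}^{l} λ_{jk} · (i!/(i−k)!) · ξ_j^{i−k} for all i ∈ ℕ, with distinct points ξ_j. Let p(X) = ∏_{j=1}^r (X − ξ_j). Then for every polynomial q ∈ k[X] and every a ∈ ℕ, the linear functional σ(X^i) = m_i satisfies σ(X^a · q · p^{l+1}) = 0; in particular, writing p^{l+1} = ∑_{n=0}^{(l+1)r} c_n X^n, one has ∑_{n=0}^{(l+1)r} c_n m_{a+n} = 0 for every a ∈ ℕ. -/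
/-!
Expanding `q` in monomials, the moment functional is `σ q = ∑ⱼ ∑ₖ λⱼₖ q⁽ᵏ⁾(ξⱼ)`, a combination of
derivatives of order `≤ l` evaluated at the `ξⱼ`. Every multiple of `p^(l+1)` is divisible by
`(X - ξⱼ)^(l+1)`, so its derivatives of order `≤ l` vanish at `ξⱼ`, hence `σ` kills it. The
recurrence for the moments is the case `q = 1`, read coefficientwise.
-/

open Polynomial Finset

namespace Polynomial

variable {R : Type*} [CommRing R]

theorem eval_iterate_derivative_eq_sum_coeff (q : R[X]) (k : ℕ) (x : R) :
    (derivative^[k] q).eval x =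
      ∑ n ∈ q.support, q.coeff n * ((n.descFactorial k : R) * x ^ (n - k)) := by
  conv_lhs => rw [q.as_sum_support_C_mul_X_pow]
  simp [iterate_derivative_sum, iterate_derivative_C_mul,
    iterate_derivative_X_pow_eq_natCast_mul, eval_finsetSum]

theorem isRoot_iterate_derivative_of_pow_dvd {f : R[X]} {c : R} {k l : ℕ} (hk : k ≤ l)
    (h : (X - C c) ^ (l + 1) ∣ f) : (derivative^[k] f).IsRoot c :=
  dvd_iff_isRoot.mp <|
    (dvd_pow_self _ (by omega)).trans (pow_sub_dvd_iterate_derivative_of_pow_dvd k h)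

theorem sum_X_pow_mul_eq_sum_range {S : Type*} [AddCommMonoid S] (g : R[X]) {N : ℕ}
    (hg : g.natDegree ≤ N) (f : ℕ → R → S) (hf : ∀ n, f n 0 = 0) (a : ℕ) :
    (X ^ a * g).sum f = ∑ n ∈ range (N + 1), f (a + n) (g.coeff n) := by
  have hdeg : (X ^ a * g).natDegree < a + (N + 1) := by
    have := natDegree_mul_le (p := X ^ a) (q := g)
    have := natDegree_X_pow_le (R := R) a
    omega
  rw [sum_over_range' _ hf _ hdeg, sum_range_add, sum_eq_zero, zero_add]
  · simp only [add_comm a, coeff_X_pow_mul]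
  · intro n hn
    rw [coeff_X_pow_mul', if_neg (by simpa using hn), hf]

section Moments

variable {ι : Type*} [Fintype ι] {ξ : ι → R} {lam : ι → ℕ → R} {l : ℕ} {m : ℕ → R}

theorem sum_mul_moment_eq_sum_eval_iterate_derivative
    (hm : ∀ i : ℕ, m i = ∑ j, ∑ k ∈ range (l + 1),
      lam j k * (i.descFactorial k : R) * ξ j ^ (i - k))
    (q : R[X]) :
    (q.sum fun n c => c * m n) =
      ∑ j, ∑ k ∈ range (l + 1), lam j k * (derivative^[k] q).eval (ξ j) := by
  simp only [Polynomial.sum, hm, eval_iterate_derivative_eq_sum_coeff, mul_sum]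
  rw [sum_comm]
  refine sum_congr rfl fun j _ => ?_
  rw [sum_comm]
  refine sum_congr rfl fun k _ => sum_congr rfl fun n _ => ?_
  ring

theorem sum_mul_moment_eq_zero_of_pow_dvd
    (hm : ∀ i : ℕ, m i = ∑ j, ∑ k ∈ range (l + 1),
      lam j k * (i.descFactorial k : R) * ξ j ^ (i - k))
    {q : R[X]} (hq : ∀ j, (X - C (ξ j)) ^ (l + 1) ∣ q) :
    (q.sum fun n c => c * m n) = 0 := by
  rw [sum_mul_moment_eq_sum_eval_iterate_derivative hm]
  refine sum_eq_zero fun j _ => sum_eq_zero fun k hk => ?_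
  rw [(isRoot_iterate_derivative_of_pow_dvd (Nat.lt_succ_iff.mp (mem_range.mp hk)) (hq j)).eq_zero,
    mul_zero]

end Moments

end Polynomial

theorem stmt17_general (K : Type*) [Field K]
    (r l : ℕ)
    (ξ : Fin r → K)
    (lam : Fin r → ℕ → K)
    (m : ℕ → K)
    (hm : ∀ i : ℕ, m i = ∑ j : Fin r, ∑ k ∈ Finset.range (l + 1),
      lam j k * (i.descFactorial k : K) * ξ j ^ (i - k))
    (σ : Polynomial K → K)
    (hσ : ∀ q : Polynomial K, σ q = ∑ n ∈ q.support, q.coeff n * m n)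
    (p : Polynomial K) (hp : p = ∏ j : Fin r, (X - C (ξ j))) :
    (∀ (q : Polynomial K) (a : ℕ), σ (X ^ a * q * p ^ (l + 1)) = 0) ∧
      (∀ a : ℕ, ∑ n ∈ Finset.range ((l + 1) * r + 1),
        (p ^ (l + 1)).coeff n * m (a + n) = 0) := by
  have hσ_sum : ∀ q, σ q = q.sum fun n c => c * m n := hσ
  have hσ_vanish : ∀ q, p ^ (l + 1) ∣ q → σ q = 0 := fun q hq => by
    rw [hσ_sum]
    refine sum_mul_moment_eq_zero_of_pow_dvd hm fun j => (pow_dvd_pow_of_dvd ?_ _).trans hq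
    exact hp ▸ dvd_prod_of_mem _ (mem_univ j)
  refine ⟨fun q a => hσ_vanish _ (dvd_mul_left _ _), fun a => ?_⟩
  have hdeg : (p ^ (l + 1)).natDegree ≤ (l + 1) * r := by
    simp [hp, natDegree_pow]
  have h := hσ_vanish (X ^ a * p ^ (l + 1)) (dvd_mul_left _ _)
  rwa [hσ_sum, sum_X_pow_mul_eq_sum_range _ hdeg _ fun n => zero_mul (m n)] at h

/-- if `m_i = ∑_j ∑_{k≤l} λ_{jk}·(i!/(i−k)!)·ξ_j^{i−k}` with distinct `ξ_j`,
and `p = ∏_j (X − ξ_j)`, then the functional `σ(X^i) = m_i` kills `X^a·q·p^{l+1}` for every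
polynomial `q` and every `a`; in particular `∑_n c_n m_{a+n} = 0` where `p^{l+1} = ∑ c_n X^n`. -/
theorem stmt17 (K : Type*) [Field K] [CharZero K]
    (r l : ℕ) (hr : 1 ≤ r)
    (ξ : Fin r → K) (hξ : Function.Injective ξ)
    (lam : Fin r → ℕ → K)
    (m : ℕ → K)
    (hm : ∀ i : ℕ, m i = ∑ j : Fin r, ∑ k ∈ Finset.range (l + 1),
      lam j k * (i.descFactorial k : K) * ξ j ^ (i - k))
    (σ : Polynomial K → K)
    (hσ : ∀ q : Polynomial K, σ q = ∑ n ∈ q.support, q.coeff n * m n)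
    (p : Polynomial K) (hp : p = ∏ j : Fin r, (X - C (ξ j))) :
    (∀ (q : Polynomial K) (a : ℕ), σ (X ^ a * q * p ^ (l + 1)) = 0) ∧
      (∀ a : ℕ, ∑ n ∈ Finset.range ((l + 1) * r + 1),
        (p ^ (l + 1)).coeff n * m (a + n) = 0) :=
  stmt17_general K r l ξ lam m hm σ hσ p hp
end
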